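/- Let p be a prime and let Ω = {0,1}^n. Define f ∈ F_p^Ω by f(x) = ∑_{i=1}^{n} x_i − k, and for A ⊆ [n] define x_A ∈ F_p^Ω by x_A(x) = ∏_{j∈A} x_j. Assume 0 ≤ s, k ≤ p−1 and s + k ≤ n. Then the set of functions {x_A · f : A ⊆ [n], |A| ≤ s−1} is linearly independent in the vector space F_p^Ω over F_p. -/

import Mathlib

/-!
Suppose `∑_{|A| < s} g_A x_A f = 0`. Evaluating at the indicator vector of `T ⊆ [n]` gives
`(|T| - k) Λ(T) = 0`, where `Λ(T) = ∑_{A ⊆ T} g_A`. If `A₀` is a set of minimal size with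
`g_{A₀} ≠ 0`, then `Λ(A₀) = g_{A₀} ≠ 0`, so `|A₀| ≡ k (mod p)` and hence `|A₀| ≤ k`, as
`|A₀| < s < p`. Take `S` of size `s` disjoint from `A₀`: for `∅ ≠ U ⊆ S` the factor
`|A₀ ∪ U| - k ≡ |U|` is a unit since `0 < |U| ≤ s < p`, so `Λ(A₀ ∪ U) = 0`. Hence the `s`-th
difference `∑_{U ⊆ S} (-1)^|U| Λ(A₀ ∪ U)` equals `g_{A₀}`; but it vanishes, because `Λ` has
degree `< s` in the indicator coordinates.
-/

open Finset

namespace Finset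

variable {α R : Type*} [DecidableEq α] [CommRing R]

theorem sum_powerset_neg_one_pow_card_mul_eq_zero {S : Finset α} {a : α} (ha : a ∈ S)
    (φ : Finset α → R) (hφ : ∀ U, φ (insert a U) = φ U) :
    ∑ U ∈ S.powerset, (-1) ^ #U * φ U = 0 := by
  rw [← insert_erase ha, sum_powerset_insert (notMem_erase a S), ← sum_add_distrib]
  refine sum_eq_zero fun U hU => ?_
  have haU : a ∉ U := fun h => notMem_erase a S (mem_powerset.1 hU h)
  rw [card_insert_of_notMem haU, hφ, pow_succ]
  ring

end Finset

section SumOfSubsets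

variable {α R : Type*} [Fintype α] [DecidableEq α] [CommRing R] {s : ℕ}

def sumOfSubsets (g : {A : Finset α // #A < s} → R) (T : Finset α) : R :=
  ∑ A, if A.1 ⊆ T then g A else 0

theorem sum_powerset_neg_one_pow_card_mul_sumOfSubsets_union_eq_zero
    (g : {A : Finset α // #A < s} → R) (B : Finset α) {S : Finset α} (hS : s ≤ #S) :
    ∑ U ∈ S.powerset, (-1) ^ #U * sumOfSubsets g (B ∪ U) = 0 := by
  simp only [sumOfSubsets, mul_sum]
  rw [sum_comm]
  refine sum_eq_zero fun A _ => ?_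
  obtain ⟨a, haS, haA⟩ := exists_mem_notMem_of_card_lt_card (A.2.trans_le hS)
  refine sum_powerset_neg_one_pow_card_mul_eq_zero haS (fun U => if A.1 ⊆ B ∪ U then g A else 0)
    fun U => ?_
  simp only [union_insert, subset_insert_iff_of_notMem haA]

theorem sumOfSubsets_eq_of_forall_card_le {g : {A : Finset α // #A < s} → R}
    (A₀ : {A : Finset α // #A < s}) (hmin : ∀ A, g A ≠ 0 → #A₀.1 ≤ #A.1) :
    sumOfSubsets g A₀.1 = g A₀ := by
  rw [sumOfSubsets, sum_eq_single A₀ (fun A _ hne => ?_) (by simp), if_pos subset_rfl]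
  refine ite_eq_right_iff.2 fun hsub => ?_
  by_contra hA
  exact hne (Subtype.ext (eq_of_subset_of_card_le hsub (hmin A hA)))

variable [NoZeroDivisors R] (p : ℕ) [CharP R p] {k : ℕ} {g : {A : Finset α // #A < s} → R}

theorem sumOfSubsets_union_eq_zero (hg : ∀ T : Finset α, ((#T : R) - k) * sumOfSubsets g T = 0)
    {B U : Finset α} (hB : (#B : R) = k) (hBU : Disjoint B U) (hU : U.Nonempty) (hUp : #U < p) :
    sumOfSubsets g (B ∪ U) = 0 := by
  have hUR : (#U : R) ≠ 0 := by
    rw [Ne, CharP.cast_eq_zero_iff R p]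
    exact Nat.not_dvd_of_pos_of_lt (card_pos.2 hU) hUp
  have h := hg (B ∪ U)
  rw [card_union_of_disjoint hBU, Nat.cast_add, hB, add_sub_cancel_left] at h
  exact (mul_eq_zero.1 h).resolve_left hUR

theorem eq_zero_of_forall_card_sub_mul_sumOfSubsets_eq_zero (hsp : s < p)
    (hsk : s + k ≤ Fintype.card α) (hg : ∀ T : Finset α, ((#T : R) - k) * sumOfSubsets g T = 0) :
    g = 0 := by
  classical
  by_contra hne
  obtain ⟨A₀, hA₀, hmin⟩ := exists_min_image ({A | g A ≠ 0} : Finset _) (fun A => #A.1)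
    (by simpa [filter_nonempty_iff, funext_iff] using hne)
  replace hA₀ : g A₀ ≠ 0 := (mem_filter.1 hA₀).2
  have hΛ : sumOfSubsets g A₀.1 = g A₀ :=
    sumOfSubsets_eq_of_forall_card_le A₀ fun A hA => hmin A (by simpa using hA)
  have hcast : (#A₀.1 : R) = k :=
    sub_eq_zero.1 ((mul_eq_zero.1 (hg A₀.1)).resolve_right (hΛ ▸ hA₀))
  have hle : #A₀.1 ≤ k := by
    have h := (CharP.natCast_eq_natCast R p).1 hcast
    rw [Nat.ModEq, Nat.mod_eq_of_lt (A₀.2.trans hsp)] at h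
    exact h ▸ Nat.mod_le k p
  obtain ⟨S, hSA₀, hS⟩ := exists_subset_card_eq (s := A₀.1ᶜ) (n := s)
    (by rw [card_compl]; omega)
  have hdiff := sum_powerset_neg_one_pow_card_mul_sumOfSubsets_union_eq_zero g A₀.1 hS.ge
  rw [sum_eq_single ∅ (fun U hU hU₀ => ?_) (fun h => absurd (empty_mem_powerset S) h)] at hdiff
  · simp [hΛ, hA₀] at hdiff
  have hUS := mem_powerset.1 hU
  rw [sumOfSubsets_union_eq_zero p hg hcast
    (disjoint_right.2 fun a ha => mem_compl.1 (hSA₀ (hUS ha))) (nonempty_iff_ne_empty.2 hU₀)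
    ((card_le_card hUS).trans_lt (hS ▸ hsp)), mul_zero]

end SumOfSubsets

theorem swallowing_lemma_linearIndependent_general
    (p : ℕ) (hp : p.Prime) (n s k : ℕ)
    (hs : s ≤ p - 1) (hsk : s + k ≤ n) :
    LinearIndependent (ZMod p)
      (fun A : {A : Finset (Fin n) // A.card < s} =>
        fun x : Fin n → Bool =>
          (∏ j ∈ A.1, (if x j then (1 : ZMod p) else 0)) *
            ((∑ i : Fin n, if x i then (1 : ZMod p) else 0) - (k : ZMod p))) := by
  classical
  have : Fact p.Prime := ⟨hp⟩
  rw [Fintype.linearIndependent_iff]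
  intro g hg
  refine congrFun (eq_zero_of_forall_card_sub_mul_sumOfSubsets_eq_zero p (k := k)
    (by have := hp.pos; omega) (by simpa using hsk) fun T => ?_)
  have hT := congrFun hg fun i => decide (i ∈ T)
  simp only [Finset.sum_apply, Pi.smul_apply, smul_eq_mul, decide_eq_true_eq, prod_boole, sum_boole,
    filter_mem_eq_inter, univ_inter, Pi.zero_apply] at hT
  rw [sumOfSubsets, mul_sum]
  refine (sum_congr rfl fun A _ => ?_).trans hT
  simp only [← subset_iff]
  split_ifs <;> ring

/-- **Swallowing lemma** (Lemma 5.38 in Babai–Frankl). Let `p` be a prime and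
`Ω = {0,1}^n` (modeled as `Fin n → Bool`). Define `f ∈ F_p^Ω` by `f x = ∑_{i=1}^n x_i − k`,
and for `A ⊆ [n]` define `x_A ∈ F_p^Ω` by `x_A x = ∏_{j ∈ A} x_j`. Assume
`0 ≤ s, k ≤ p − 1` and `s + k ≤ n`. Then the functions `x_A · f` for `|A| ≤ s − 1`
(equivalently `|A| < s`) are linearly independent in the `F_p`-vector space `F_p^Ω`. -/
theorem swallowing_lemma_linearIndependent
    (p : ℕ) (hp : p.Prime) (n s k : ℕ)
    (hs : s ≤ p - 1) (hk : k ≤ p - 1) (hsk : s + k ≤ n) :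
    LinearIndependent (ZMod p)
      (fun A : {A : Finset (Fin n) // A.card < s} =>
        fun x : Fin n → Bool =>
          (∏ j ∈ A.1, (if x j then (1 : ZMod p) else 0)) *
            ((∑ i : Fin n, if x i then (1 : ZMod p) else 0) - (k : ZMod p))) :=
  swallowing_lemma_linearIndependent_general p hp n s k hs hsk
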